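/- arXiv:2406.13922 — 2 statements merged into one kernel-verified Lean document; each statement's English description precedes it below -/
import Mathlib

section
/- Let c ≥ 0 and let W = A + iB be a standard circularly-symmetric complex Gaussian random variable, i.e. A and B are independent real Gaussian random variables with mean 0 and variance 1/2. Then Var[ (1 − |√c·W − 1|² / (1+c))·log₂ e ] = (1 − 1/(1+c)²)·(log₂ e)². -/
/-!
Writing `W = A + iB`, `|√c W - 1|² = (√c A - 1)² + (√c B)²` is the sum of the squares of two
independent Gaussians with laws `N(-1, c/2)` and `N(0, c/2)`. For `Y ~ N(μ, v)` one has
`Var[Y²] = E[Y⁴] - E[Y²]² = 2v² + 4μ²v`, the moments being read off the derivatives at `0` of the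
moment generating function `exp (μ t + v t² / 2)`. Hence the variance of `|√c W - 1|²` is
`c² + 2c = (1 + c)² - 1`, and the affine rescaling by `-log₂ e / (1 + c)` gives the claim.
-/

open MeasureTheory ProbabilityTheory Real Polynomial
open scoped NNReal

namespace ProbabilityTheory

/-- The recurrence is the one satisfied by the derivatives of
`P (μ + v t) * exp (μ t + v t² / 2)`, the moment generating function of `gaussianReal μ v` being
`exp (μ t + v t² / 2)`; so `(gaussianMomentPoly v n).eval μ` is the `n`-th moment. -/
noncomputable def gaussianMomentPoly (v : ℝ) : ℕ → ℝ[X]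
  | 0 => 1
  | n + 1 => C v * derivative (gaussianMomentPoly v n) + X * gaussianMomentPoly v n

lemma hasDerivAt_eval_mul_exp_quadratic (P : ℝ[X]) (μ v t : ℝ) :
    HasDerivAt (fun t ↦ P.eval (μ + v * t) * rexp (μ * t + v * t ^ 2 / 2))
      ((C v * derivative P + X * P).eval (μ + v * t) * rexp (μ * t + v * t ^ 2 / 2)) t := by
  have hq : HasDerivAt (fun t ↦ μ + v * t) v t := by
    simpa using ((hasDerivAt_id t).const_mul v).const_add μ
  have hE : HasDerivAt (fun t ↦ μ * t + v * t ^ 2 / 2) (μ + v * t) t :=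
    (((hasDerivAt_id t).const_mul μ).add
      (((hasDerivAt_pow 2 t).const_mul v).div_const 2)).congr_deriv
        (by simp only [mul_one, Nat.cast_ofNat, Nat.add_one_sub_one, pow_one]; ring)
  refine (((P.hasDerivAt _).comp t hq).mul hE.exp).congr_deriv ?_
  simp only [eval_add, eval_mul, eval_C, eval_X, Function.comp_apply]
  ring

lemma iteratedDeriv_exp_quadratic (μ v : ℝ) (n : ℕ) :
    iteratedDeriv n (fun t ↦ rexp (μ * t + v * t ^ 2 / 2))
      = fun t ↦ (gaussianMomentPoly v n).eval (μ + v * t) * rexp (μ * t + v * t ^ 2 / 2) := by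
  induction n with
  | zero => simp [gaussianMomentPoly]
  | succ n ih =>
    rw [iteratedDeriv_succ, ih]
    exact funext fun t ↦ (hasDerivAt_eval_mul_exp_quadratic _ μ v t).deriv

lemma integral_pow_gaussianReal (μ : ℝ) (v : ℝ≥0) (n : ℕ) :
    ∫ x, x ^ n ∂gaussianReal μ v = (gaussianMomentPoly v n).eval μ := by
  have h := iteratedDeriv_mgf_zero (X := id) (μ := gaussianReal μ v) (by simp) n
  rw [mgf_id_gaussianReal, iteratedDeriv_exp_quadratic] at h
  simpa using h.symm

lemma memLp_sq_gaussianReal (μ : ℝ) (v : ℝ≥0) :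
    MemLp (fun x ↦ x ^ 2) 2 (gaussianReal μ v) := by
  refine (memLp_two_iff_integrable_sq (by fun_prop)).2 ?_
  simpa [← pow_mul] using
    integrable_pow_of_mem_interior_integrableExpSet (X := id) (μ := gaussianReal μ v) (by simp) 4

lemma variance_sq_gaussianReal (μ : ℝ) (v : ℝ≥0) :
    Var[fun x ↦ x ^ 2; gaussianReal μ v] = 2 * v ^ 2 + 4 * μ ^ 2 * v := by
  rw [variance_eq_sub (memLp_sq_gaussianReal μ v)]
  simp only [Pi.pow_apply, ← pow_mul, integral_pow_gaussianReal]
  simp only [gaussianMomentPoly, derivative_one, mul_zero, mul_one, zero_add, derivative_X,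
    derivative_add, derivative_C, derivative_mul, one_mul, zero_mul, eval_add, eval_mul, eval_C,
    eval_one, eval_X]
  ring

variable {Ω : Type*} {mΩ : MeasurableSpace Ω} {P : Measure Ω} {X : Ω → ℝ} {μ : ℝ} {v : ℝ≥0}

lemma HasLaw.affine_gaussianReal (hX : HasLaw X (gaussianReal μ v) P) (a b : ℝ) :
    HasLaw (fun ω ↦ a * X ω + b) (gaussianReal (a * μ + b) (.mk (a ^ 2) (sq_nonneg a) * v)) P := by
  refine HasLaw.fun_comp (Y := fun x ↦ a * x + b) ⟨by fun_prop, ?_⟩ hX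
  rw [show (fun x ↦ a * x + b) = (· + b) ∘ (a * ·) from rfl,
    ← Measure.map_map (by fun_prop) (by fun_prop), gaussianReal_map_const_mul,
    gaussianReal_map_add_const]

lemma HasLaw.memLp_sq_of_gaussianReal (hX : HasLaw X (gaussianReal μ v) P) :
    MemLp (fun ω ↦ X ω ^ 2) 2 P :=
  (memLp_map_measure_iff (g := fun x ↦ x ^ 2) (by fun_prop) hX.aemeasurable).1
    (hX.map_eq ▸ memLp_sq_gaussianReal μ v)

lemma HasLaw.variance_sq_of_gaussianReal (hX : HasLaw X (gaussianReal μ v) P) :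
    Var[fun ω ↦ X ω ^ 2; P] = 2 * v ^ 2 + 4 * μ ^ 2 * v := by
  rw [← variance_sq_gaussianReal, ← hX.map_eq, variance_map (by fun_prop) hX.aemeasurable]
  rfl

end ProbabilityTheory

lemma Complex.sq_norm_ofReal_mul_add_mul_I_sub_one (s a b : ℝ) :
    ‖(s : ℂ) * ((a : ℂ) + (b : ℂ) * Complex.I) - 1‖ ^ 2 = (s * a - 1) ^ 2 + (s * b) ^ 2 := by
  rw [show (s : ℂ) * ((a : ℂ) + (b : ℂ) * Complex.I) - 1
      = ((s * a - 1 : ℝ) : ℂ) + ((s * b : ℝ) : ℂ) * Complex.I by push_cast; ring,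
    Complex.sq_norm, Complex.normSq_add_mul_I]

/-- For `c ≥ 0` and `W = A + iB` a standard circularly-symmetric complex
Gaussian (`A`, `B` independent real Gaussians of mean `0`, variance `1/2`),
`Var[(1 − |√c·W − 1|²/(1+c))·log₂ e] = (1 − 1/(1+c)²)·(log₂ e)²`. -/
theorem variance_information_density_term
    {Ω : Type*} [MeasureSpace Ω] [IsProbabilityMeasure (ℙ : Measure Ω)]
    (A B : Ω → ℝ) (hAm : Measurable A) (hBm : Measurable B)
    (hA : Measure.map A ℙ = gaussianReal 0 (1/2))
    (hB : Measure.map B ℙ = gaussianReal 0 (1/2))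
    (hAB : IndepFun A B ℙ)
    (c : ℝ) (hc : 0 ≤ c) :
    variance (fun ω =>
        (1 - ‖(Real.sqrt c : ℂ) * ((A ω : ℂ) + (B ω : ℂ) * Complex.I) - 1‖ ^ 2
            / (1 + c)) * Real.logb 2 (Real.exp 1)) ℙ
      = (1 - 1 / (1 + c) ^ 2) * (Real.logb 2 (Real.exp 1)) ^ 2 := by
  set L := Real.logb 2 (Real.exp 1)
  set s := Real.sqrt c
  have hs : s ^ 2 = c := Real.sq_sqrt hc
  have hc₁ : 1 + c ≠ 0 := by positivity
  have hY₁ := (HasLaw.mk hAm.aemeasurable hA).affine_gaussianReal s (-1)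
  have hY₂ := (HasLaw.mk hBm.aemeasurable hB).affine_gaussianReal s 0
  have hind : IndepFun (fun ω ↦ (s * A ω + -1) ^ 2) (fun ω ↦ (s * B ω + 0) ^ 2) ℙ :=
    hAB.comp (by fun_prop : Measurable fun x ↦ (s * x + -1) ^ 2)
      (by fun_prop : Measurable fun x ↦ (s * x + 0) ^ 2)
  have hf : (fun ω ↦ (1 - ‖(s : ℂ) * ((A ω : ℂ) + (B ω : ℂ) * Complex.I) - 1‖ ^ 2 / (1 + c)) * L)
      = fun ω ↦ L + -(L / (1 + c)) * ((s * A ω + -1) ^ 2 + (s * B ω + 0) ^ 2) := by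
    ext ω
    rw [Complex.sq_norm_ofReal_mul_add_mul_I_sub_one]
    field_simp
    ring
  rw [hf, variance_const_add (by fun_prop), variance_const_mul,
    hind.variance_fun_add hY₁.memLp_sq_of_gaussianReal hY₂.memLp_sq_of_gaussianReal,
    hY₁.variance_sq_of_gaussianReal, hY₂.variance_sq_of_gaussianReal]
  simp only [NNReal.coe_mul, NNReal.coe_mk, NNReal.coe_div, NNReal.coe_one, NNReal.coe_ofNat, hs]
  field_simp
  ring
end

section
/- (Meta-converse for maximal error probability.) Let 𝒜 and ℬ be measurable spaces, let K be a Markov kernel from 𝒜 to ℬ (the channel, x ↦ P_{Y|X=x}), let ε ∈ (0,1), and let M be a positive integer. Suppose c₁,…,c_M ∈ 𝒜 are codewords and D is a Markov kernel from ℬ to the finite set {1,…,M} (a randomized decoder) such that for every i, ∫ D(y)({i}) dK(cᵢ)(y) ≥ 1 − ε (maximal error probability at most ε). Then for every probability measure Q on ℬ there exists an index i with β_{1−ε}(K(cᵢ), Q) ≤ 1/M, where for probability measures P, Q on ℬ and α ∈ [0,1], β_α(P,Q) := inf { ∫ T dQ : T : ℬ → [0,1] measurable, ∫ T dP ≥ α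 }. Equivalently, M ≤ sup_i 1/β_{1−ε}(K(cᵢ), Q). -/
/-!
The decoder of an `(M, ε)`-code splits the output space into the soft decision regions
`T i y = D y {i}`.  Each `T i` is a test of power at least `1 - ε` for `K (c i)` against `Q`, and
the `Q`-integrals of the `T i` are the masses of the probability measure `D ∘ₘ Q` on the `M`
messages, so they sum to one.  Hence some `T i` has `∫ T i dQ ≤ 1/M`, which bounds
`β_{1-ε}(K (c i), Q)`.
-/

open MeasureTheory ProbabilityTheory

/-- The Neyman–Pearson function `β_α(P,Q)`: the optimal type-II error
`inf { ∫ T dQ : T measurable with values in [0,1], ∫ T dP ≥ α }` of a randomized test of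
power at least `α` between `P` and `Q`. -/
noncomputable def npBeta {Ω : Type*} [MeasurableSpace Ω] (P Q : Measure Ω) (α : ℝ) : ℝ :=
  sInf {r : ℝ | ∃ T : Ω → ℝ, Measurable T ∧ (∀ ω, T ω ∈ Set.Icc (0 : ℝ) 1) ∧
    α ≤ ∫ ω, T ω ∂P ∧ r = ∫ ω, T ω ∂Q}

theorem npBeta_le_integral {Ω : Type*} [MeasurableSpace Ω] {P Q : Measure Ω} {α : ℝ}
    {T : Ω → ℝ} (hT : Measurable T) (hT_mem : ∀ ω, T ω ∈ Set.Icc (0 : ℝ) 1)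
    (hα : α ≤ ∫ ω, T ω ∂P) :
    npBeta P Q α ≤ ∫ ω, T ω ∂Q :=
  csInf_le ⟨0, by rintro r ⟨S, -, hS, -, rfl⟩; exact integral_nonneg fun ω ↦ (hS ω).1⟩
    ⟨T, hT, hT_mem, hα, rfl⟩

theorem exists_le_one_div_card_of_sum_eq_one {ι : Type*} [Fintype ι] {a : ι → ℝ}
    (ha : ∑ i, a i = 1) : ∃ i, a i ≤ 1 / Fintype.card ι := by
  have hne : (Finset.univ : Finset ι).Nonempty :=
    Finset.nonempty_of_sum_ne_zero (ha ▸ one_ne_zero)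
  have hcard : (Fintype.card ι : ℝ) ≠ 0 := by
    simpa [Finset.univ_nonempty_iff] using hne.card_pos.ne'
  obtain ⟨i, -, hi⟩ := Finset.exists_le_of_sum_le hne
    (f := a) (g := fun _ ↦ 1 / (Fintype.card ι : ℝ)) (by simp [ha, hcard])
  exact ⟨i, hi⟩

theorem integral_measureReal_eq_comp_measureReal {α β : Type*} [MeasurableSpace α]
    [MeasurableSpace β] (κ : Kernel α β) [IsFiniteKernel κ] (μ : Measure α) {s : Set β}
    (hs : MeasurableSet s) :
    ∫ a, (κ a).real s ∂μ = (κ ∘ₘ μ).real s := by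
  simp only [Measure.real]
  rw [integral_toReal (κ.measurable_coe hs).aemeasurable (.of_forall fun _ ↦ measure_lt_top _ _),
    Measure.bind_apply hs κ.aemeasurable]

theorem meta_converse_general
    {𝒜 ℬ : Type*} [MeasurableSpace 𝒜] [MeasurableSpace ℬ]
    (K : Kernel 𝒜 ℬ)
    (ε : ℝ)
    (M : ℕ) (c : Fin M → 𝒜)
    (D : Kernel ℬ (Fin M)) [IsMarkovKernel D]
    (hdec : ∀ i : Fin M, 1 - ε ≤ ∫ y, (D y {i}).toReal ∂(K (c i)))
    (Q : Measure ℬ) [IsProbabilityMeasure Q] :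
    ∃ i : Fin M, npBeta (K (c i)) Q (1 - ε) ≤ 1 / M := by
  have hsum : ∑ i, ∫ y, (D y).real {i} ∂Q = 1 := by
    simp only [integral_measureReal_eq_comp_measureReal D Q (measurableSet_singleton _),
      sum_measureReal_singleton, Finset.coe_univ, probReal_univ]
  obtain ⟨i, hi⟩ := exists_le_one_div_card_of_sum_eq_one hsum
  refine ⟨i, (npBeta_le_integral ?_ ?_ (hdec i)).trans (by simpa [Measure.real] using hi)⟩
  · exact (D.measurable_coe (measurableSet_singleton i)).ennreal_toReal
  · exact fun y ↦ ⟨measureReal_nonneg, measureReal_le_one⟩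

/-- (Meta-converse, Lemma 4.) Let `K` be a Markov kernel (the channel
`x ↦ P_{Y|X=x}`), `ε ∈ (0,1)`, and `c₁, …, c_M` codewords with a randomized decoder `D`
whose probability of correctly decoding each message is at least `1 − ε`. Then for every
(output) probability measure `Q` there is an index `i` with
`β_{1−ε}(K(cᵢ), Q) ≤ 1/M`, i.e. `M ≤ sup_i 1/β_{1−ε}(K(cᵢ), Q)`. -/
theorem meta_converse
    {𝒜 ℬ : Type*} [MeasurableSpace 𝒜] [MeasurableSpace ℬ]
    (K : Kernel 𝒜 ℬ) [IsMarkovKernel K]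
    (ε : ℝ) (hε : ε ∈ Set.Ioo (0 : ℝ) 1)
    (M : ℕ) (hM : 0 < M) (c : Fin M → 𝒜)
    (D : Kernel ℬ (Fin M)) [IsMarkovKernel D]
    (hdec : ∀ i : Fin M, 1 - ε ≤ ∫ y, (D y {i}).toReal ∂(K (c i)))
    (Q : Measure ℬ) [IsProbabilityMeasure Q] :
    ∃ i : Fin M, npBeta (K (c i)) Q (1 - ε) ≤ 1 / M :=
  meta_converse_general K ε M c D hdec Q
end
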